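/- arXiv:2405.13899 — 4 statements merged into one kernel-verified Lean document; each statement's English description precedes it below -/
import Mathlib

section
/- Proposition 1: The map ψ, sending a partition π of [d] to the subspace ψ(π) = {x ∈ ℝ^d : x_i = x_j whenever i ∼_π j}, is injective, and its image is exactly the collection Fix = {Fix_G : G a subgroup of S_d} of all fixed-point subspaces of subgroups of S_d. Hence ψ is a bijection between the set 𝒫_d of all partitions of [d] and Fix. -/
/-- The subspace `ψ(π) = {x ∈ ℝ^d : x i = x j whenever i ∼_π j}` associated with a
partition (equivalence relation) `π` of `Fin d`. -/
def partitionSubspace {d : ℕ} (π : Setoid (Fin d)) : Submodule ℝ (Fin d → ℝ) where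
  carrier := {x | ∀ i j : Fin d, π.r i j → x i = x j}
  add_mem' := by
    intro a b ha hb i j h
    simp only [Pi.add_apply, ha i j h, hb i j h]
  zero_mem' := by intro i j _; rfl
  smul_mem' := by
    intro c a ha i j h
    simp only [Pi.smul_apply, ha i j h]

/-- The fixed-point subspace `Fix_G = {x ∈ ℝ^d : g·x = x for all g ∈ G}` of a subgroup
`G ≤ S_d`, acting on `ℝ^d` by permuting coordinates: `(g·x) i = x (g i)`. -/
def fixedSubspace {d : ℕ} (G : Subgroup (Equiv.Perm (Fin d))) : Submodule ℝ (Fin d → ℝ) where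
  carrier := {x | ∀ g ∈ G, ∀ i : Fin d, x (g i) = x i}
  add_mem' := by
    intro a b ha hb g hg i
    simp only [Pi.add_apply, ha g hg i, hb g hg i]
  zero_mem' := by intro g hg i; rfl
  smul_mem' := by
    intro c a ha g hg i
    simp only [Pi.smul_apply, ha g hg i]

/-- **Proposition 1.** The map `ψ`, sending a partition `π` of `[d]` to the
subspace `ψ(π) = {x ∈ ℝ^d : x i = x j whenever i ∼_π j}`, is injective and its range is
exactly the collection `Fix = {Fix_G : G ≤ S_d}` of all fixed-point subspaces of subgroups
of `S_d`; hence `ψ` is a bijection between the set of partitions of `[d]` and `Fix`. -/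
theorem partitionSubspace_bijective_onto_fixedSubspaces (d : ℕ) (hd : 0 < d) :
    Function.Injective (partitionSubspace (d := d)) ∧
      Set.range (partitionSubspace (d := d)) =
        {S : Submodule ℝ (Fin d → ℝ) | ∃ G : Subgroup (Equiv.Perm (Fin d)), S = fixedSubspace G} := by

  classical
  constructor
  · -- Injectivity
    have key : ∀ (σ τ : Setoid (Fin d)), partitionSubspace σ = partitionSubspace τ →
        ∀ i j, σ.r i j → τ.r i j := by
      intro σ τ h i j hij
      set x : Fin d → ℝ := fun k => if τ.r i k then 1 else 0 with hx
      have hxτ : x ∈ partitionSubspace τ := by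
        intro a b hab
        simp only [hx]
        by_cases h1 : τ.r i a
        · have h2 : τ.r i b := τ.trans h1 hab
          simp [h1, h2]
        · have h2 : ¬ τ.r i b := fun h2 => h1 (τ.trans h2 (τ.symm hab))
          simp [h1, h2]
      have hxσ : x ∈ partitionSubspace σ := h ▸ hxτ
      by_contra hc
      have hv := hxσ i j hij
      simp only [hx, hc, if_false] at hv
      split_ifs at hv with h'
      · exact one_ne_zero hv
      · exact h' (τ.refl i)
    intro π π' h
    exact Setoid.ext fun a b => ⟨key π π' h a b, key π' π h.symm a b⟩
  · ext S
    constructor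
    · rintro ⟨π, rfl⟩
      refine ⟨{ carrier := {g : Equiv.Perm (Fin d) | ∀ i, π.r (g i) i}
                one_mem' := fun i => π.refl i
                mul_mem' := ?_
                inv_mem' := ?_ }, ?_⟩
      · intro g h hg hh i
        exact π.trans (hg (h i)) (hh i)
      · intro g hg i
        exact π.symm (by simpa using hg (g⁻¹ i))
      · ext x
        constructor
        · intro hx g hg i
          exact hx _ _ (hg i)
        · intro hx i j hij
          have hs : (Equiv.swap i j : Equiv.Perm (Fin d)) ∈
              ({g : Equiv.Perm (Fin d) | ∀ i, π.r (g i) i} : Set _) := by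
            intro k
            rcases eq_or_ne k i with rfl | hki
            · simpa using π.symm hij
            rcases eq_or_ne k j with rfl | hkj
            · simpa [Equiv.swap_apply_right] using hij
            · rw [Equiv.swap_apply_of_ne_of_ne hki hkj]
          have := hx (Equiv.swap i j) hs j
          simpa [Equiv.swap_apply_right] using this
    · rintro ⟨G, rfl⟩
      refine ⟨{ r := fun i j => ∃ g ∈ G, g i = j
                iseqv := ⟨fun i => ⟨1, G.one_mem, rfl⟩,
                  ?_, ?_⟩ }, ?_⟩
      · rintro a b ⟨g, hg, rfl⟩
        exact ⟨g⁻¹, G.inv_mem hg, by simp⟩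
      · rintro a b c ⟨g, hg, rfl⟩ ⟨h, hh, rfl⟩
        exact ⟨h * g, G.mul_mem hh hg, rfl⟩
      · ext x
        constructor
        · rintro hx g hg i
          exact (hx _ _ ⟨g, hg, rfl⟩).symm
        · rintro hx i j ⟨g, hg, rfl⟩
          exact (hx g hg i).symm
end

section
/- Well-separated projection lower bound (Section 5): Let θ ∈ ℝ^d and ε₀ > 0 be such that for all i, j ∈ [d], θ_i ≠ θ_j implies |θ_i − θ_j| ≥ ε₀. Then for every partition π of [d] such that θ ∉ ψ(π), the Euclidean orthogonal projection onto ψ(π) satisfies ‖θ − Π_{ψ(π)}(θ)‖² ≥ ε₀²/2. -/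
open scoped RealInnerProductSpace

/-- The subspace `ψ(π) = {x ∈ ℝ^d : x i = x j whenever i ∼_π j}` of Euclidean space
associated with a partition (equivalence relation) `π` of `Fin d`. -/
def partitionSubspaceE {d : ℕ} (π : Setoid (Fin d)) :
    Submodule ℝ (EuclideanSpace ℝ (Fin d)) where
  carrier := {x | ∀ i j : Fin d, π.r i j → x i = x j}
  add_mem' := by
    intro a b ha hb i j h
    simp only [PiLp.add_apply, ha i j h, hb i j h]
  zero_mem' := by intro i j _; rfl
  smul_mem' := by
    intro c a ha i j h
    simp only [PiLp.smul_apply, ha i j h]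

/-- Well-separated projection lower bound: let `θ ∈ ℝ^d` and `ε₀ > 0`
be such that `|θ i − θ j| ≥ ε₀` whenever `θ i ≠ θ j`. Then for every partition `π` of
`[d]` with `θ ∉ ψ(π)`, the orthogonal projection onto `ψ(π)` satisfies
`‖θ − Π_{ψ(π)}(θ)‖² ≥ ε₀²/2`. -/
theorem sq_norm_sub_orthogonalProjection_ge_of_separated (d : ℕ)
    (θ : EuclideanSpace ℝ (Fin d)) (ε₀ : ℝ) (hε₀ : 0 < ε₀)
    (hsep : ∀ i j : Fin d, θ i ≠ θ j → ε₀ ≤ |θ i - θ j|)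
    (π : Setoid (Fin d)) (hθ : θ ∉ partitionSubspaceE π) :
    ε₀ ^ 2 / 2 ≤
      ‖θ - (Submodule.orthogonalProjection (partitionSubspaceE π) θ : EuclideanSpace ℝ (Fin d))‖ ^ 2 := by
  obtain ⟨i, j, hr, hne⟩ : ∃ i j, π.r i j ∧ θ i ≠ θ j := by
    by_contra h
    push_neg at h
    exact hθ (fun i j hij => h i j hij)
  set p : EuclideanSpace ℝ (Fin d) :=
    (Submodule.orthogonalProjection (partitionSubspaceE π) θ : EuclideanSpace ℝ (Fin d)) with hp
  have hpij : p i = p j := (Submodule.orthogonalProjection (partitionSubspaceE π) θ).2 i j hr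
  have hijne : i ≠ j := fun h => hne (by rw [h])
  have hnorm : ‖θ - p‖ ^ 2 = ∑ k, (θ k - p k) ^ 2 := by
    rw [EuclideanSpace.norm_eq, Real.sq_sqrt (by positivity)]
    simp [sq_abs]
  have hsum : (θ i - p i) ^ 2 + (θ j - p j) ^ 2 ≤ ∑ k, (θ k - p k) ^ 2 := by
    have h := Finset.sum_le_sum_of_subset_of_nonneg (Finset.subset_univ {i, j})
      (fun k _ _ => sq_nonneg (θ k - p k))
    rwa [Finset.sum_pair hijne] at h
  have hεsq : ε₀ ^ 2 ≤ (θ i - θ j) ^ 2 := by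
    have := hsep i j hne
    nlinarith [abs_nonneg (θ i - θ j), sq_abs (θ i - θ j)]
  have hrw : θ i - θ j = (θ i - p i) - (θ j - p j) := by rw [hpij]; ring
  rw [hrw] at hεsq
  rw [hnorm]
  nlinarith [hsum, hεsq, hpij, sq_nonneg (θ i - p i + (θ j - p j))]
end

section
/- Deterministic core of the model selection bound (from the proof of Proposition 4): Let H be a real inner product space, f* , η ∈ H, and Y = f* + η. Let S and S' be finite-dimensional subspaces of H with f* ∈ S', and suppose ‖Y − Π_S(Y)‖ ≤ ‖Y − Π_{S'}(Y)‖. Then ‖Π_S(Y) − f*‖ ≤ 2 ‖Π_{S̄}(η)‖, where S̄ = S + span{f*} is the subspace generated by S and f*. -/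
open scoped RealInnerProductSpace

/-- Deterministic core of the model selection bound: let `H` be a real
inner product space, `f*, η ∈ H`, and `Y = f* + η`. Let `S, S'` be finite-dimensional
subspaces of `H` with `f* ∈ S'`, and suppose `‖Y − Π_S Y‖ ≤ ‖Y − Π_{S'} Y‖`. Then
`‖Π_S Y − f*‖ ≤ 2 ‖Π_{S̄} η‖`, where `S̄ = S + span{f*}`. -/
theorem model_selection_deterministic_core {H : Type*} [NormedAddCommGroup H]
    [InnerProductSpace ℝ H] (fstar η Y : H) (hY : Y = fstar + η)
    (S S' : Submodule ℝ H) [FiniteDimensional ℝ S] [FiniteDimensional ℝ S']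
    (hf : fstar ∈ S')
    (hmin : ‖Y - (Submodule.orthogonalProjection S Y : H)‖ ≤ ‖Y - (Submodule.orthogonalProjection S' Y : H)‖) :
    ‖(Submodule.orthogonalProjection S Y : H) - fstar‖ ≤
      2 * ‖(Submodule.orthogonalProjection (S ⊔ Submodule.span ℝ {fstar}) η : H)‖ := by
  set K := S ⊔ Submodule.span ℝ {fstar} with hK
  have hfK : fstar ∈ K := (le_sup_right : Submodule.span ℝ {fstar} ≤ K) (Submodule.mem_span_singleton_self fstar)
  have hSK : S ≤ K := le_sup_left
  set p : H := (Submodule.orthogonalProjection K Y : H) with hp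
  set q : H := (Submodule.orthogonalProjection S Y : H) with hq
  set e : H := (Submodule.orthogonalProjection K η : H) with he
  have hqK : q ∈ K := hSK (Submodule.orthogonalProjection S Y).2
  have hpK : p ∈ K := (Submodule.orthogonalProjection K Y).2
  have heK : e ∈ K := (Submodule.orthogonalProjection K η).2
  -- p = fstar + e
  have hpe : p = fstar + e := by
    rw [hp, hY, map_add, Submodule.coe_add, he]
    congr 1
    exact Submodule.starProjection_eq_self_iff.mpr hfK
  -- orthogonality of Y - p to K
  have horth : ∀ w ∈ K, ⟪Y - p, w⟫ = 0 := fun w hw =>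
    (Submodule.mem_orthogonal' K (Y - p)).mp
      (Submodule.sub_starProjection_mem_orthogonal (K := K) Y) w hw
  -- ‖Y - q‖ ≤ ‖η‖
  have hmin2 : ‖Y - q‖ ≤ ‖η‖ := by
    refine hmin.trans ?_
    have : ‖Y - (Submodule.orthogonalProjection S' Y : H)‖ ≤ ‖Y - fstar‖ := by
      change ‖Y - S'.starProjection Y‖ ≤ _
      rw [Submodule.starProjection_minimal]
      exact ciInf_le ⟨0, fun x hx => by rcases hx with ⟨v, rfl⟩; positivity⟩ (⟨fstar, hf⟩ : S')
    simpa [hY] using this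
  -- Pythagoras 1: ‖Y - q‖² = ‖Y - p‖² + ‖p - q‖²
  have hpyth1 : ‖Y - q‖ ^ 2 = ‖Y - p‖ ^ 2 + ‖p - q‖ ^ 2 := by
    have hdec : Y - q = (Y - p) + (p - q) := by abel
    rw [hdec, norm_add_sq_real, horth _ (K.sub_mem hpK hqK)]
    ring
  -- Pythagoras 2: ‖η‖² = ‖Y - p‖² + ‖e‖²
  have hpyth2 : ‖η‖ ^ 2 = ‖Y - p‖ ^ 2 + ‖e‖ ^ 2 := by
    have hdec : η = (Y - p) + e := by rw [hpe, hY]; abel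
    rw [hdec, norm_add_sq_real, horth _ heK]
    ring
  -- ‖p - q‖ ≤ ‖e‖
  have hpq : ‖p - q‖ ≤ ‖e‖ := by
    have h1 : ‖p - q‖ ^ 2 ≤ ‖e‖ ^ 2 := by
      nlinarith [pow_le_pow_left₀ (norm_nonneg (Y - q)) hmin2 2, hpyth1, hpyth2]
    nlinarith [norm_nonneg e, norm_nonneg (p - q)]
  calc ‖q - fstar‖ = ‖(q - p) + e‖ := by rw [hpe]; congr 1; abel
    _ ≤ ‖q - p‖ + ‖e‖ := norm_add_le _ _
    _ = ‖p - q‖ + ‖e‖ := by rw [norm_sub_rev]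
    _ ≤ ‖e‖ + ‖e‖ := by linarith
    _ = 2 * ‖e‖ := by ring
end

section
/- Counting fixed-point subspaces by dimension (consequence of Propositions 1 and 2 stated in Section 3): For each k ∈ [d], the map ψ restricts to a bijection between the set of partitions of [d] with exactly k blocks and the set of k-dimensional members of Fix = {Fix_G : G a subgroup of S_d}; hence the number of k-dimensional fixed-point subspaces in Fix equals the number of partitions of [d] into exactly k blocks (the Stirling number of the second kind). -/
noncomputable def blockEquiv {d : ℕ} (π : Setoid (Fin d)) :
    partitionSubspace π ≃ₗ[ℝ] (Quotient π → ℝ) where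
  toFun x := Quotient.lift (x : Fin d → ℝ) (fun i j h => x.2 i j h)
  map_add' := by
    intro x y; funext q; induction q using Quotient.ind; rfl
  map_smul' := by
    intro c x; funext q; induction q using Quotient.ind; rfl
  invFun f := ⟨fun i => f ⟦i⟧, fun i j h => congrArg f (Quotient.sound h)⟩
  left_inv x := by ext i; rfl
  right_inv f := by funext q; induction q using Quotient.ind; rfl

lemma finrank_partitionSubspace {d : ℕ} (π : Setoid (Fin d)) :
    Module.finrank ℝ (partitionSubspace π) = Nat.card (Quotient π) := by
  have : Fintype (Quotient π) := Fintype.ofFinite _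
  rw [(blockEquiv π).finrank_eq, Module.finrank_fintype_fun_eq_card,
    Nat.card_eq_fintype_card]

lemma partitionSubspace_injective {d : ℕ} :
    Function.Injective (partitionSubspace (d := d)) := by
  intro π₁ π₂ h
  have key : ∀ (π π' : Setoid (Fin d)), partitionSubspace π = partitionSubspace π' →
      ∀ i j, π'.r i j → π.r i j := by
    intro π π' hh i j hij
    by_contra hc
    classical
    set x : Fin d → ℝ := fun m => if π.r i m then 1 else 0 with hx
    have hxmem : x ∈ partitionSubspace π := by
      intro a b hab
      simp only [hx]
      by_cases ha : π.r i a
      · rw [if_pos ha, if_pos (show π.r i b from π.trans ha hab)]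
      · rw [if_neg ha, if_neg (show ¬ π.r i b from fun hb => ha (π.trans hb (π.symm hab)))]
    rw [hh] at hxmem
    have h1 := hxmem i j hij
    rw [hx] at h1
    simp only [if_pos (show π.r i i from π.refl i), if_neg hc] at h1
    exact one_ne_zero h1
  exact Setoid.ext fun i j => ⟨key π₂ π₁ h.symm i j, key π₁ π₂ h i j⟩

/-- The subgroup of permutations preserving each block of `π`. -/
def blockGroup {d : ℕ} (π : Setoid (Fin d)) : Subgroup (Equiv.Perm (Fin d)) where
  carrier := {g | ∀ i, π.r (g i) i}
  one_mem' := fun i => π.refl i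
  mul_mem' := by
    intro g h hg hh i
    exact π.trans (hg (h i)) (hh i)
  inv_mem' := by
    intro g hg i
    have := hg (g⁻¹ i)
    rw [show g (g⁻¹ i) = i from Equiv.apply_symm_apply g i] at this
    exact π.symm this

lemma partitionSubspace_eq_fixed {d : ℕ} (π : Setoid (Fin d)) :
    partitionSubspace π = fixedSubspace (blockGroup π) := by
  apply le_antisymm
  · intro x hx g hg i
    exact hx _ _ (hg i)
  · intro x hx i j hij
    have hswap : Equiv.swap i j ∈ blockGroup π := by
      intro m
      rcases eq_or_ne m i with rfl | hmi
      · rw [Equiv.swap_apply_left]; exact π.symm hij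
      rcases eq_or_ne m j with rfl | hmj
      · rw [Equiv.swap_apply_right]; exact hij
      · rw [Equiv.swap_apply_of_ne_of_ne hmi hmj]
    have := hx _ hswap j
    rwa [Equiv.swap_apply_right] at this

lemma fixedSubspace_eq_partition {d : ℕ} (G : Subgroup (Equiv.Perm (Fin d))) :
    fixedSubspace G = partitionSubspace (MulAction.orbitRel G (Fin d)) := by
  apply le_antisymm
  · intro x hx i j hij
    obtain ⟨g, hg⟩ := hij
    rw [← hg]
    exact hx g g.2 j
  · intro x hx g hg i
    exact hx (g i) i ⟨⟨g, hg⟩, rfl⟩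

/-- Counting fixed-point subspaces by dimension: for each `k ∈ [d]`,
the map `ψ` restricts to a bijection between the set of partitions of `[d]` with exactly
`k` blocks and the set of `k`-dimensional members of `Fix = {Fix_G : G ≤ S_d}`; hence
the number of `k`-dimensional fixed-point subspaces equals the number of partitions of
`[d]` into exactly `k` blocks (the Stirling number of the second kind). -/
theorem card_fixedSubspaces_of_dim_eq_card_partitions (d : ℕ) (hd : 0 < d)
    (k : ℕ) (hk : 1 ≤ k) (hkd : k ≤ d) :
    Set.BijOn (partitionSubspace (d := d))
      {π : Setoid (Fin d) | Nat.card (Quotient π) = k}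
      {S : Submodule ℝ (Fin d → ℝ) |
        (∃ G : Subgroup (Equiv.Perm (Fin d)), S = fixedSubspace G) ∧
          Module.finrank ℝ S = k} ∧
    Nat.card {S : Submodule ℝ (Fin d → ℝ) //
        (∃ G : Subgroup (Equiv.Perm (Fin d)), S = fixedSubspace G) ∧
          Module.finrank ℝ S = k} =
      Nat.card {π : Setoid (Fin d) // Nat.card (Quotient π) = k} := by
  have hbij : Set.BijOn (partitionSubspace (d := d))
      {π : Setoid (Fin d) | Nat.card (Quotient π) = k}
      {S : Submodule ℝ (Fin d → ℝ) |
        (∃ G : Subgroup (Equiv.Perm (Fin d)), S = fixedSubspace G) ∧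
          Module.finrank ℝ S = k} := by
    refine ⟨?_, fun _ _ _ _ h => partitionSubspace_injective h, ?_⟩
    · intro π hπ
      exact ⟨⟨blockGroup π, partitionSubspace_eq_fixed π⟩,
        (finrank_partitionSubspace π).trans hπ⟩
    · rintro S ⟨⟨G, rfl⟩, hrank⟩
      refine ⟨MulAction.orbitRel G (Fin d), ?_, (fixedSubspace_eq_partition G).symm⟩
      rw [Set.mem_setOf_eq, ← finrank_partitionSubspace, ← fixedSubspace_eq_partition]
      exact hrank
  exact ⟨hbij, (Nat.card_congr (Set.BijOn.equiv _ hbij)).symm⟩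
end
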